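/- For almost every x∈(0,1], liminf_{n→∞} d_n(x) = 1; consequently liminf_{n→∞} (d_n(x) − log_2 n)/log_2(log n) = −∞. -/

import Mathlib

open MeasureTheory Filter Set Real
open scoped ENNReal Topology

/-!
On `(0, 1]` the map `p2dT` has the full affine branches `(2⁻¹ ^ (n + 1), 2⁻¹ ^ n]` of slope
`2 ^ (n + 1)`, so it preserves Lebesgue measure and the event `(0, 1/2]` (next digit at least 2)
is independent of the future: `μ((0, 1/2] ∩ T⁻¹ W) = μ(W) / 2`. Hence the points whose first `j`
digits are all at least 2 have measure at most `2⁻ʲ`, the points with no digit 1 form a null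
set, and by invariance so do the points with no digit 1 after time `N`. Thus a.e. the digit 1
occurs infinitely often; since every digit is at least 1 this gives `liminf d_n = 1`, and along
those times the normalised quantity equals `(1 - log₂ n) / log₂ log n → -∞`.
-/

/-- First digit of the power-2-decaying Gauss-like expansion:
`⌈y⌉` in the paper denotes the smallest integer strictly larger than `y`. -/
noncomputable def p2dD1 (x : ℝ) : ℕ := (⌊-Real.logb 2 x⌋ + 1).toNat

/-- The Gauss-like map `T x = 2^n x - 1` on `(1/2^n, 1/2^(n-1)]`. -/
noncomputable def p2dT (x : ℝ) : ℝ := 2 ^ p2dD1 x * x - 1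

/-- `n`-th digit (`n ≥ 1`) of the P2DGL expansion. -/
noncomputable def p2dDigit (n : ℕ) (x : ℝ) : ℕ := p2dD1 (p2dT^[n-1] x)

/-- Maximal digit among the first `n` digits. -/
noncomputable def p2dL (n : ℕ) (x : ℝ) : ℕ :=
  Finset.sup (Finset.Icc 1 n) (fun i => p2dDigit i x)

section Recurrence

variable {α : Type*} [MeasurableSpace α] {μ : Measure α} {f : α → α} {A : Set α} {c : ℝ≥0∞}

lemma measure_setOf_forall_le_iterate_mem_le (hf : Measurable f) (hA : MeasurableSet A)
    (h : ∀ W, MeasurableSet W → μ (A ∩ f ⁻¹' W) ≤ c * μ W) (j : ℕ) :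
    μ {x | ∀ i ≤ j, f^[i] x ∈ A} ≤ c ^ j * μ A := by
  induction j with
  | zero => simp
  | succ j ih =>
    have hmeas : MeasurableSet {x | ∀ i ≤ j, f^[i] x ∈ A} := by
      simp only [ofPred_forall]
      exact .iInter fun i => .iInter fun _ => hf.iterate i hA
    have hsub : {x | ∀ i ≤ j + 1, f^[i] x ∈ A} ⊆ A ∩ f ⁻¹' {x | ∀ i ≤ j, f^[i] x ∈ A} :=
      fun x hx => ⟨hx 0 (Nat.zero_le _), fun i hi => hx (i + 1) (by omega)⟩
    calc μ {x | ∀ i ≤ j + 1, f^[i] x ∈ A}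
        ≤ μ (A ∩ f ⁻¹' {x | ∀ i ≤ j, f^[i] x ∈ A}) := measure_mono hsub
      _ ≤ c * μ {x | ∀ i ≤ j, f^[i] x ∈ A} := h _ hmeas
      _ ≤ c * (c ^ j * μ A) := by gcongr
      _ = c ^ (j + 1) * μ A := by ring

lemma measure_setOf_forall_iterate_mem_eq_zero (hf : Measurable f) (hA : MeasurableSet A)
    (hμA : μ A ≠ ∞) (hc : c < 1) (h : ∀ W, MeasurableSet W → μ (A ∩ f ⁻¹' W) ≤ c * μ W) :
    μ {x | ∀ i, f^[i] x ∈ A} = 0 := by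
  have hlim : Tendsto (fun j => c ^ j * μ A) atTop (𝓝 0) := by
    simpa using
      ENNReal.Tendsto.mul_const (ENNReal.tendsto_pow_atTop_nhds_zero_of_lt_one hc) (Or.inr hμA)
  refine le_antisymm (ge_of_tendsto' hlim fun j => ?_) bot_le
  exact (measure_mono (ofPred_subset_ofPred.2 fun x hx i _ => hx i)).trans
    (measure_setOf_forall_le_iterate_mem_le hf hA h j)

lemma ae_frequently_iterate_notMem (hf : Measure.QuasiMeasurePreserving f μ μ)
    (hA : MeasurableSet A) (hμA : μ A ≠ ∞) (hc : c < 1)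
    (h : ∀ W, MeasurableSet W → μ (A ∩ f ⁻¹' W) ≤ c * μ W) :
    ∀ᵐ x ∂μ, ∃ᶠ k in atTop, f^[k] x ∉ A := by
  have hnull := measure_setOf_forall_iterate_mem_eq_zero hf.measurable hA hμA hc h
  have hescape : ∀ᵐ x ∂μ, ∀ N, f^[N] x ∉ {x | ∀ i, f^[i] x ∈ A} :=
    ae_all_iff.2 fun N => (hf.iterate N).ae (measure_eq_zero_iff_ae_notMem.1 hnull)
  filter_upwards [hescape] with x hx
  rw [frequently_atTop]
  intro N
  by_contra! hN
  exact hx N fun i => by rw [← Function.iterate_add_apply]; exact hN _ (by omega)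

end Recurrence

lemma liminf_eq_of_frequently_eq {ι β : Type*} [ConditionallyCompleteLinearOrder β]
    {l : Filter ι} {u : ι → β} {a : β} (hle : ∀ᶠ n in l, a ≤ u n) (heq : ∃ᶠ n in l, u n = a) :
    liminf u l = a :=
  le_antisymm
    (liminf_le_of_frequently_le (heq.mono fun _ h => h.le) (isBoundedUnder_of_eventually_ge hle))
    (le_liminf_of_le (IsCoboundedUnder.of_frequently_le (heq.mono fun _ h => h.le)) hle)

lemma EReal.liminf_coe_eq_bot_of_frequently_le {ι : Type*} {l : Filter ι} {u v : ι → ℝ}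
    (hle : ∃ᶠ n in l, u n ≤ v n) (hv : Tendsto v l atBot) :
    liminf (fun n => (u n : EReal)) l = ⊥ := by
  refine (EReal.eq_bot_iff_forall_lt _).2 fun C => ?_
  have hfreq : ∃ᶠ n in l, (u n : EReal) ≤ ((C - 1 : ℝ) : EReal) :=
    (hle.and_eventually (tendsto_atBot.1 hv (C - 1))).mono fun n h =>
      EReal.coe_le_coe_iff.2 (h.1.trans h.2)
  exact (liminf_le_of_frequently_le' hfreq).trans_lt (EReal.coe_lt_coe_iff.2 (by linarith))

lemma tendsto_sub_exp_div_atBot (a : ℝ) : Tendsto (fun u => (a - exp u) / u) atTop atBot := by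
  have h := (tendsto_const_nhds (x := a)).div_atTop tendsto_id |>.add_atBot
    (tendsto_neg_atTop_atBot.comp (by simpa using tendsto_exp_div_pow_atTop 1))
  exact h.congr fun u => by simp [sub_div]; ring

lemma tendsto_one_sub_logb_div_logb_log :
    Tendsto (fun n : ℕ => (1 - logb 2 n) / logb 2 (log n)) atTop atBot := by
  have hlog : Tendsto (fun n : ℕ => log (log n)) atTop atTop :=
    tendsto_log_atTop.comp (tendsto_log_atTop.comp tendsto_natCast_atTop_atTop)
  refine ((tendsto_sub_exp_div_atBot (log 2)).comp hlog).congr' ?_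
  filter_upwards [eventually_gt_atTop 1] with n hn
  have hl2 : log 2 ≠ 0 := by positivity
  have hlogn : 0 < log n := log_pos (by exact_mod_cast hn)
  simp only [Function.comp_apply, exp_log hlogn, logb, one_sub_div hl2,
    div_div_div_cancel_right₀ hl2]

def p2dBranch (n : ℕ) : Set ℝ := Ioc (2⁻¹ ^ (n + 1)) (2⁻¹ ^ n)

lemma exists_mem_p2dBranch {x : ℝ} (hx : x ∈ Ioc 0 1) : ∃ n, x ∈ p2dBranch n :=
  exists_nat_pow_near_of_lt_one hx.1 hx.2 (by norm_num) (by norm_num)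

open scoped Function in
lemma pairwise_disjoint_p2dBranch : Pairwise (Disjoint on p2dBranch) :=
  (pow_right_anti₀ (by norm_num : (0 : ℝ) ≤ 2⁻¹) (by norm_num)).pairwise_disjoint_on_Ioc_succ

lemma iUnion_p2dBranch_add (k : ℕ) : ⋃ n, p2dBranch (n + k) = Ioc 0 (2⁻¹ ^ k) := by
  ext x
  simp only [mem_iUnion]
  constructor
  · rintro ⟨n, hlo, hhi⟩
    exact ⟨(by positivity : (0 : ℝ) < _).trans hlo,
      hhi.trans (pow_right_anti₀ (by norm_num) (by norm_num) (by omega))⟩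
  · intro hx
    obtain ⟨m, hm⟩ :=
      exists_mem_p2dBranch ⟨hx.1, hx.2.trans (pow_le_one₀ (by norm_num) (by norm_num))⟩
    have hkm : k ≤ m := by
      by_contra! hmk
      exact (hm.1.trans_le hx.2).not_ge (pow_right_anti₀ (by norm_num) (by norm_num) hmk)
    exact ⟨m - k, by rwa [Nat.sub_add_cancel hkm]⟩

lemma logb_two_inv_pow (n : ℕ) : logb 2 ((2 : ℝ)⁻¹ ^ n) = -n := by
  simp [logb_pow, logb_inv]

lemma p2dD1_of_mem_p2dBranch {n : ℕ} {x : ℝ} (hx : x ∈ p2dBranch n) : p2dD1 x = n + 1 := by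
  have hx0 : 0 < x := (by positivity : (0 : ℝ) < _).trans hx.1
  have hlo := logb_lt_logb (b := 2) one_lt_two (by positivity) hx.1
  have hhi := logb_le_logb_of_le (b := 2) one_lt_two hx0 hx.2
  rw [logb_two_inv_pow] at hlo hhi
  have hfloor : ⌊-logb 2 x⌋ = n := by
    rw [Int.floor_eq_iff]
    push_cast at hlo ⊢
    constructor <;> linarith
  simp [p2dD1, hfloor]

lemma p2dT_of_mem_p2dBranch {n : ℕ} {x : ℝ} (hx : x ∈ p2dBranch n) :
    p2dT x = 2 ^ (n + 1) * x - 1 := by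
  rw [p2dT, p2dD1_of_mem_p2dBranch hx]

lemma p2dBranch_eq_preimage (n : ℕ) :
    p2dBranch n = (fun x : ℝ => 2 ^ (n + 1) * x - 1) ⁻¹' Ioc 0 1 := by
  ext x
  have hp : (0 : ℝ) < 2 ^ (n + 1) := by positivity
  have h1 : (2 : ℝ)⁻¹ ^ (n + 1) * 2 ^ (n + 1) = 1 := by rw [← mul_pow]; norm_num
  have h2 : (2 : ℝ)⁻¹ ^ n * 2 ^ (n + 1) = 2 := by rw [pow_succ, ← mul_assoc, ← mul_pow]; norm_num
  simp only [p2dBranch, mem_Ioc, mem_preimage]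
  constructor <;> rintro ⟨ha, hb⟩ <;> constructor <;> nlinarith

lemma preimage_p2dT_inter_p2dBranch (n : ℕ) (S : Set ℝ) :
    p2dT ⁻¹' S ∩ p2dBranch n = (fun x : ℝ => 2 ^ (n + 1) * x - 1) ⁻¹' (S ∩ Ioc 0 1) := by
  ext x
  rw [preimage_inter, ← p2dBranch_eq_preimage]
  constructor <;> rintro ⟨hS, hx⟩ <;> refine ⟨?_, hx⟩
  · rwa [mem_preimage, ← p2dT_of_mem_p2dBranch hx]
  · rwa [mem_preimage, p2dT_of_mem_p2dBranch hx]

lemma volume_preimage_p2dT_inter_p2dBranch (n : ℕ) (S : Set ℝ) :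
    volume (p2dT ⁻¹' S ∩ p2dBranch n) = 2⁻¹ ^ (n + 1) * volume (S ∩ Ioc 0 1) := by
  have haffine : (fun x : ℝ => 2 ^ (n + 1) * x - 1) = (· + -1) ∘ ((2 : ℝ) ^ (n + 1) * ·) := by
    ext x; simp [sub_eq_add_neg]
  rw [preimage_p2dT_inter_p2dBranch, haffine, preimage_comp,
    Real.volume_preimage_mul_left (by positivity), measure_preimage_add_right]
  congr 1
  rw [abs_of_pos (by positivity), ← inv_pow, ENNReal.ofReal_pow (by norm_num),
    ENNReal.ofReal_inv_of_pos two_pos, ENNReal.ofReal_ofNat]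

lemma measurable_p2dT : Measurable p2dT := by
  unfold p2dT p2dD1 logb
  fun_prop

lemma volume_preimage_p2dT_inter_Ioc (k : ℕ) {S : Set ℝ} (hS : MeasurableSet S) :
    volume (p2dT ⁻¹' S ∩ Ioc 0 (2⁻¹ ^ k)) = 2⁻¹ ^ k * volume (S ∩ Ioc 0 1) := by
  rw [← iUnion_p2dBranch_add, inter_iUnion, measure_iUnion
    (fun m n hmn => (pairwise_disjoint_p2dBranch (by omega : m + k ≠ n + k)).mono
      inter_subset_right inter_subset_right)
    (fun n => (measurable_p2dT hS).inter measurableSet_Ioc)]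
  simp only [volume_preimage_p2dT_inter_p2dBranch, ENNReal.tsum_mul_right]
  congr 1
  have hgeom : ∑' n : ℕ, (2⁻¹ : ℝ≥0∞) ^ n = 2 := by
    rw [ENNReal.tsum_geometric, ENNReal.one_sub_inv_two, inv_inv]
  simp only [pow_add, ENNReal.tsum_mul_right, hgeom]
  rw [mul_right_comm, pow_one, ENNReal.mul_inv_cancel two_ne_zero ENNReal.ofNat_ne_top, one_mul]

lemma measurePreserving_p2dT :
    MeasurePreserving p2dT (volume.restrict (Ioc 0 1)) (volume.restrict (Ioc 0 1)) := by
  refine ⟨measurable_p2dT, Measure.ext fun S hS => ?_⟩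
  rw [Measure.map_apply measurable_p2dT hS, Measure.restrict_apply (measurable_p2dT hS),
    Measure.restrict_apply hS]
  simpa using volume_preimage_p2dT_inter_Ioc 0 hS

lemma restrict_Ioc_inter_preimage_p2dT {W : Set ℝ} (hW : MeasurableSet W) :
    volume.restrict (Ioc 0 1) (Ioc 0 2⁻¹ ∩ p2dT ⁻¹' W) = 2⁻¹ * volume.restrict (Ioc 0 1) W := by
  rw [Measure.restrict_apply (measurableSet_Ioc.inter (measurable_p2dT hW)),
    Measure.restrict_apply hW, inter_right_comm,
    inter_eq_left.2 (Ioc_subset_Ioc_right (by norm_num)), inter_comm]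
  simpa using volume_preimage_p2dT_inter_Ioc 1 hW

lemma mapsTo_p2dT : MapsTo p2dT (Ioc 0 1) (Ioc 0 1) := fun x hx => by
  obtain ⟨n, hn⟩ := exists_mem_p2dBranch hx
  rw [p2dT_of_mem_p2dBranch hn]
  rwa [p2dBranch_eq_preimage] at hn

lemma one_le_p2dDigit {x : ℝ} (hx : x ∈ Ioc 0 1) (n : ℕ) : 1 ≤ p2dDigit n x := by
  obtain ⟨m, hm⟩ := exists_mem_p2dBranch (mapsTo_p2dT.iterate (n - 1) hx)
  rw [p2dDigit, p2dD1_of_mem_p2dBranch hm]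
  omega

lemma ae_frequently_p2dDigit_eq_one :
    ∀ᵐ x ∂(volume.restrict (Ioc (0 : ℝ) 1)), ∃ᶠ n in atTop, p2dDigit n x = 1 := by
  have hvisit := ae_frequently_iterate_notMem measurePreserving_p2dT.quasiMeasurePreserving
    measurableSet_Ioc (measure_ne_top _ _) (by norm_num : (2⁻¹ : ℝ≥0∞) < 1)
    fun W hW => (restrict_Ioc_inter_preimage_p2dT hW).le
  filter_upwards [hvisit, ae_restrict_mem measurableSet_Ioc] with x hfreq hx
  rw [frequently_atTop] at hfreq ⊢
  intro N
  obtain ⟨k, hk, hkA⟩ := hfreq N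
  have hhalf : p2dT^[k] x ∈ p2dBranch 0 := by
    have := mapsTo_p2dT.iterate k hx
    exact ⟨by simpa using not_and.1 hkA this.1, by simpa using this.2⟩
  refine ⟨k + 1, by omega, ?_⟩
  simpa [p2dDigit] using p2dD1_of_mem_p2dBranch hhalf

/-- a.e. liminf behaviour of digits. -/
theorem p2d_digit_liminf :
    ∀ᵐ x ∂(volume.restrict (Set.Ioc (0:ℝ) 1)),
      liminf (fun n : ℕ => p2dDigit n x) atTop = 1 ∧
      liminf (fun n : ℕ =>
        ((((p2dDigit n x : ℝ) - Real.logb 2 n) / Real.logb 2 (Real.log n) : ℝ) : EReal))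
        atTop = ⊥ := by
  filter_upwards [ae_frequently_p2dDigit_eq_one, ae_restrict_mem measurableSet_Ioc] with x hfreq hx
  refine ⟨liminf_eq_of_frequently_eq (.of_forall (one_le_p2dDigit hx)) hfreq, ?_⟩
  refine EReal.liminf_coe_eq_bot_of_frequently_le (hfreq.mono fun n hn => ?_)
    tendsto_one_sub_logb_div_logb_log
  rw [hn, Nat.cast_one]
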